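/- arXiv:2212.14622 — 2 statements merged into one kernel-verified Lean document; each statement's English description precedes it below -/
import Mathlib

section
/- Let f be a probability density on ℝ, ℓ < μ reals, and Δ > 0 with μ − Δ ≥ ℓ + Δ. Suppose f is nondecreasing on [ℓ − Δ, ℓ + Δ] and nonincreasing on [μ − Δ, μ + Δ]. Define θ(Δ) = [F(ℓ) − F(ℓ−Δ)]·E[(H − (ℓ−Δ))/Δ | H ∈ [ℓ−Δ, ℓ]] + [F(μ−Δ) − F(ℓ)] + [F(μ) − F(μ−Δ)]·E[(μ − H)/Δ | H ∈ [μ−Δ, μ]], where F is the CDF of f and H has density f. Then θ(Δ) ≥ (1/2)[F(μ−Δ) − F(ℓ−Δ)] + (1/2)[F(μ) − F(ℓ)]. -/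
/-!
On `[a, b]` the weight `(y - a) / (b - a)` is `1/2` plus a multiple of `y - c`, `c` the midpoint.
If `f` is nondecreasing then `∫ (y - c) f(y) ≥ 0`: averaging with the reflection `y ↦ a + b - y`
turns the integrand into `(y - c) (f y - f (a + b - y)) / 2`, a product of two factors of the same
sign. So on the increasing interval `[ℓ - Δ, ℓ]` the weighted mass is at least half the mass,
and likewise with the reversed weight `(m - y) / Δ` on the decreasing interval `[m - Δ, m]`.
-/

open MeasureTheory intervalIntegral Set

section

variable {f : ℝ → ℝ} {a b : ℝ}

theorem integral_sub_midpoint_mul_nonneg_of_monotoneOn (hab : a ≤ b)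
    (hf : IntervalIntegrable f volume a b) (hmono : MonotoneOn f (Icc a b)) :
    0 ≤ ∫ y in a..b, (y - (a + b) / 2) * f y := by
  set g : ℝ → ℝ := fun y ↦ (y - (a + b) / 2) * f y
  have hg : IntervalIntegrable g volume a b := hf.continuousOn_mul (by fun_prop)
  have hg_refl : IntervalIntegrable (fun y ↦ g (a + b - y)) volume a b := by
    simpa using (hg.comp_sub_left (a + b)).symm
  have h_refl : ∫ y in a..b, g (a + b - y) = ∫ y in a..b, g y := by
    simp [integral_comp_sub_left g (a + b)]
  have h_pointwise : ∀ y ∈ Icc a b, 0 ≤ g y + g (a + b - y) := by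
    intro y ⟨hay, hyb⟩
    have hy' : a + b - y ∈ Icc a b := ⟨by linarith, by linarith⟩
    have hsum : g y + g (a + b - y) = (y - (a + b) / 2) * (f y - f (a + b - y)) := by
      simp only [g]; ring
    rw [hsum]
    rcases le_total ((a + b) / 2) y with hy | hy
    · exact mul_nonneg (by linarith) (sub_nonneg.2 (hmono hy' ⟨hay, hyb⟩ (by linarith)))
    · exact mul_nonneg_of_nonpos_of_nonpos (by linarith)
        (sub_nonpos.2 (hmono ⟨hay, hyb⟩ hy' (by linarith)))
  have h_sum_nonneg : 0 ≤ ∫ y in a..b, (g y + g (a + b - y)) :=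
    integral_nonneg hab h_pointwise
  rw [integral_add hg hg_refl, h_refl] at h_sum_nonneg
  linarith

theorem integral_sub_midpoint_mul_nonpos_of_antitoneOn (hab : a ≤ b)
    (hf : IntervalIntegrable f volume a b) (hanti : AntitoneOn f (Icc a b)) :
    ∫ y in a..b, (y - (a + b) / 2) * f y ≤ 0 := by
  simpa [intervalIntegral.integral_neg] using
    integral_sub_midpoint_mul_nonneg_of_monotoneOn hab hf.neg hanti.neg

theorem integral_div_sub_mul_eq_half_integral_add (hab : a < b)
    (hf : IntervalIntegrable f volume a b) :
    ∫ y in a..b, (y - a) / (b - a) * f y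
      = (1 / 2) * (∫ y in a..b, f y) + (b - a)⁻¹ * ∫ y in a..b, (y - (a + b) / 2) * f y := by
  have hba : b - a ≠ 0 := sub_ne_zero.2 hab.ne'
  rw [← intervalIntegral.integral_const_mul, ← intervalIntegral.integral_const_mul,
    ← integral_add (hf.const_mul _) ((hf.continuousOn_mul (by fun_prop)).const_mul _)]
  congr 1 with y
  field_simp
  ring

theorem half_integral_le_integral_mul_of_monotoneOn (hab : a < b)
    (hf : IntervalIntegrable f volume a b) (hmono : MonotoneOn f (Icc a b)) :
    (1 / 2) * ∫ y in a..b, f y ≤ ∫ y in a..b, (y - a) / (b - a) * f y := by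
  have h_moment := integral_sub_midpoint_mul_nonneg_of_monotoneOn hab.le hf hmono
  have h_inv : 0 < (b - a)⁻¹ := inv_pos.2 (sub_pos.2 hab)
  rw [integral_div_sub_mul_eq_half_integral_add hab hf]
  nlinarith

theorem half_integral_le_integral_mul_of_antitoneOn (hab : a < b)
    (hf : IntervalIntegrable f volume a b) (hanti : AntitoneOn f (Icc a b)) :
    (1 / 2) * ∫ y in a..b, f y ≤ ∫ y in a..b, (b - y) / (b - a) * f y := by
  have h_moment := integral_sub_midpoint_mul_nonpos_of_antitoneOn hab.le hf hanti
  have h_inv : 0 < (b - a)⁻¹ := inv_pos.2 (sub_pos.2 hab)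
  have hcompl : ∫ y in a..b, (b - y) / (b - a) * f y
      = (∫ y in a..b, f y) - ∫ y in a..b, (y - a) / (b - a) * f y := by
    rw [← integral_sub hf (hf.continuousOn_mul (by fun_prop))]
    congr 1 with y
    field_simp [sub_ne_zero.2 hab.ne']
    ring
  rw [hcompl, integral_div_sub_mul_eq_half_integral_add hab hf]
  nlinarith

end

theorem theta_lower_bound_general
    (f : ℝ → ℝ) (hfint : Integrable f)
    (ℓ m Δ : ℝ) (hΔ : 0 < Δ)
    (hinc : MonotoneOn f (Set.Icc (ℓ - Δ) (ℓ + Δ)))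
    (hdec : AntitoneOn f (Set.Icc (m - Δ) (m + Δ)))
    (F : ℝ → ℝ) (hF : ∀ t, F t = ∫ y in Set.Iic t, f y) :
    (∫ y in (ℓ - Δ)..ℓ, ((y - (ℓ - Δ)) / Δ) * f y)
      + (F (m - Δ) - F ℓ)
      + (∫ y in (m - Δ)..m, ((m - y) / Δ) * f y)
    ≥ (1 / 2) * (F (m - Δ) - F (ℓ - Δ)) + (1 / 2) * (F m - F ℓ) := by
  have hF_sub (a b : ℝ) : F b - F a = ∫ y in a..b, f y := by
    rw [hF, hF]
    exact integral_Iic_sub_Iic hfint.integrableOn hfint.integrableOn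
  have h_left := half_integral_le_integral_mul_of_monotoneOn (sub_lt_self ℓ hΔ)
    hfint.intervalIntegrable (hinc.mono (Icc_subset_Icc le_rfl (by linarith)))
  have h_right := half_integral_le_integral_mul_of_antitoneOn (sub_lt_self m hΔ)
    hfint.intervalIntegrable (hdec.mono (Icc_subset_Icc le_rfl (by linarith)))
  rw [sub_sub_cancel] at h_left h_right
  linarith [hF_sub (ℓ - Δ) ℓ, hF_sub (m - Δ) m]

/-- Lower-bound step of Proposition `propheterolinear`: with `f` a density nondecreasing on
`[ℓ−Δ, ℓ+Δ]` and nonincreasing on `[μ−Δ, μ+Δ]`, the quantity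
`θ(Δ) = ∫_{ℓ−Δ}^{ℓ} ((y−(ℓ−Δ))/Δ) f(y) dy + (F(μ−Δ) − F(ℓ)) + ∫_{μ−Δ}^{μ} ((μ−y)/Δ) f(y) dy`
(the mass-weighted conditional-expectation form) satisfies
`θ(Δ) ≥ (1/2)(F(μ−Δ) − F(ℓ−Δ)) + (1/2)(F(μ) − F(ℓ))`. -/
theorem theta_lower_bound
    (f : ℝ → ℝ) (hf0 : ∀ y, 0 ≤ f y) (hfint : Integrable f) (hf1 : ∫ y, f y = 1)
    (ℓ m Δ : ℝ) (hlm : ℓ < m) (hΔ : 0 < Δ) (hsep : ℓ + Δ ≤ m - Δ)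
    (hinc : MonotoneOn f (Set.Icc (ℓ - Δ) (ℓ + Δ)))
    (hdec : AntitoneOn f (Set.Icc (m - Δ) (m + Δ)))
    (F : ℝ → ℝ) (hF : ∀ t, F t = ∫ y in Set.Iic t, f y) :
    (∫ y in (ℓ - Δ)..ℓ, ((y - (ℓ - Δ)) / Δ) * f y)
      + (F (m - Δ) - F ℓ)
      + (∫ y in (m - Δ)..m, ((m - y) / Δ) * f y)
    ≥ (1 / 2) * (F (m - Δ) - F (ℓ - Δ)) + (1 / 2) * (F m - F ℓ) :=
  theta_lower_bound_general f hfint ℓ m Δ hΔ hinc hdec F hF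
end

section
/- Let H and T be independent real random variables where T has a density p that is quasiconcave (unimodal) and H has a log-concave density f. Then the density of T − H is quasiconcave (unimodal). -/
/-!
For `δ > 0`, `g (r + δ) - g r = ∫ (p (u + δ) - p u) f (u - r) du` where `g` is the convolution.
Quasiconcavity of `p` makes `u ↦ p (u + δ) - p u` change sign at most once, from `+` to `-`, and
log-concavity of `f` makes the kernel `(u, r) ↦ f (u - r)` totally positive of order two, so by
the variation-diminishing property `r ↦ g (r + δ) - g r` changes sign at most once in the same
direction. A continuous function with this property for every `δ > 0` is quasiconcave, and `g` is
continuous because `f` is bounded (being log-concave and integrable) and translation is continuous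
in `L¹`.
-/

open MeasureTheory Set

theorem Real.quasiconcaveOn_univ_iff_min_le {β : Type*} [LinearOrder β] {g : ℝ → β} :
    QuasiconcaveOn ℝ univ g ↔ ∀ ⦃x y z⦄, x ≤ z → z ≤ y → min (g x) (g y) ≤ g z := by
  simp only [QuasiconcaveOn, convex_iff_ordConnected, ordConnected_def, mem_univ, true_and]
  refine ⟨fun h x y z hxz hzy => (h _ (min_le_left _ (g y)) (min_le_right (g x) _)) ⟨hxz, hzy⟩,
    fun h r x hx y hy z hz => (le_min hx hy).trans (h hz.1 hz.2)⟩

theorem QuasiconcaveOn.apply_add_le_of_lt {p : ℝ → ℝ} (hp : QuasiconcaveOn ℝ univ p) {δ u₀ u : ℝ}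
    (hδ : 0 ≤ δ) (h₀ : p (u₀ + δ) < p u₀) (hu : u₀ ≤ u) : p (u + δ) ≤ p u := by
  have hp := Real.quasiconcaveOn_univ_iff_min_le.mp hp
  have h₁ : p (u + δ) ≤ p (u₀ + δ) :=
    (min_le_iff.mp (hp (le_add_of_nonneg_right hδ) (by linarith))).resolve_left h₀.not_ge
  rcases le_total u (u₀ + δ) with h | h
  · exact (le_min (h₁.trans h₀.le) h₁).trans (hp hu h)
  · exact (le_min h₁ le_rfl).trans (hp h (le_add_of_nonneg_right hδ))

theorem apply_add_mul_le_of_lt {g : ℝ → ℝ} {δ : ℝ} (hδ : 0 ≤ δ)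
    (hstep : ∀ ⦃s t⦄, s ≤ t → g (s + δ) < g s → g (t + δ) ≤ g t) {x : ℝ} {k n : ℕ}
    (hk : g (x + k * δ) < g x) (hkn : k ≤ n) : g (x + n * δ) ≤ g (x + k * δ) := by
  have hsucc : ∀ i : ℕ, x + ((i + 1 : ℕ) : ℝ) * δ = x + i * δ + δ := fun i => by push_cast; ring
  obtain ⟨j, hjk, hj⟩ : ∃ j < k, g (x + ((j + 1 : ℕ) : ℝ) * δ) < g (x + j * δ) := by
    by_contra! h
    have hmono : ∀ i ≤ k, g x ≤ g (x + i * δ) := fun i hi => by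
      induction i with
      | zero => simp
      | succ i ih => exact (ih (by omega)).trans (h i (by omega))
    exact (hmono k le_rfl).not_gt hk
  rw [hsucc] at hj
  refine Nat.rel_of_forall_rel_succ_of_le_of_le (· ≥ ·) (f := fun i : ℕ => g (x + i * δ))
    (fun i hi => ?_) hjk.le hkn
  simp only [ge_iff_le, hsucc]
  exact hstep (by gcongr) hj

theorem Continuous.quasiconcaveOn_univ_of_step {g : ℝ → ℝ} (hg : Continuous g)
    (hstep : ∀ δ > 0, ∀ ⦃s t⦄, s ≤ t → g (s + δ) < g s → g (t + δ) ≤ g t) :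
    QuasiconcaveOn ℝ univ g := by
  refine Real.quasiconcaveOn_univ_iff_min_le.mpr fun x y z hxz hzy => ?_
  by_contra! hz
  -- The grid `x + i * δ` with `δ = (y - x) / n < η` ends at `y` and has a point `η`-close to `z`.
  obtain ⟨η, hη, hball⟩ :=
    Metric.eventually_nhds_iff.mp ((hg.tendsto z).eventually (gt_mem_nhds hz))
  have hxy : x < y :=
    (hxz.lt_of_ne (by rintro rfl; exact (min_le_left _ _).not_gt hz)).trans_le hzy
  obtain ⟨n, hn⟩ := exists_nat_gt ((y - x) / η)
  have hn0 : (0 : ℝ) < n := (div_pos (sub_pos.mpr hxy) hη).trans hn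
  set δ := (y - x) / n
  have hδ : 0 < δ := div_pos (sub_pos.mpr hxy) hn0
  have hδη : δ < η := by
    rw [div_lt_iff₀ hη] at hn
    rw [div_lt_iff₀ hn0]
    linarith
  set k := ⌊(z - x) / δ⌋₊
  have hk₁ : k * δ ≤ z - x := (le_div_iff₀ hδ).mp (Nat.floor_le (div_nonneg (by linarith) hδ.le))
  have hk₂ : z - x < (k + 1) * δ := (div_lt_iff₀ hδ).mp (Nat.lt_floor_add_one _)
  have hgk : g (x + k * δ) < min (g x) (g y) :=
    hball (by rw [Real.dist_eq, abs_lt]; constructor <;> linarith)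
  have hkn : k ≤ n := by
    have : (k : ℝ) * δ ≤ n * δ := by
      rw [show (n : ℝ) * δ = y - x by simp only [δ]; field_simp]
      linarith
    exact_mod_cast le_of_mul_le_mul_right this hδ
  have hy : x + n * δ = y := by simp only [δ]; field_simp; ring
  have := apply_add_mul_le_of_lt hδ.le (hstep δ hδ) (hgk.trans_le (min_le_left _ _)) hkn
  rw [hy] at this
  exact (this.trans_lt hgk).not_ge (min_le_right _ _)

def IsLogConcave (f : ℝ → ℝ) : Prop :=
  ∀ x y a b : ℝ, 0 ≤ a → 0 ≤ b → a + b = 1 → f x ^ a * f y ^ b ≤ f (a * x + b * y)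

namespace IsLogConcave

variable {f : ℝ → ℝ}

theorem quasiconcaveOn (hf : IsLogConcave f) (hf0 : ∀ x, 0 ≤ f x) :
    QuasiconcaveOn ℝ univ f := by
  refine quasiconcaveOn_iff_min_le.mpr ⟨convex_univ, fun x _ y _ a b ha hb hab => ?_⟩
  have hm := le_min (hf0 x) (hf0 y)
  calc min (f x) (f y) = min (f x) (f y) ^ a * min (f x) (f y) ^ b := by
        rw [← Real.rpow_add' hm (by rw [hab]; exact one_ne_zero), hab, Real.rpow_one]
    _ ≤ f x ^ a * f y ^ b :=
        mul_le_mul (Real.rpow_le_rpow hm (min_le_left _ _) ha)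
          (Real.rpow_le_rpow hm (min_le_right _ _) hb) (Real.rpow_nonneg hm _)
          (Real.rpow_nonneg (hf0 x) _)
    _ ≤ f (a • x + b • y) := hf x y a b ha hb hab

theorem sqrt_mul_le (hf : IsLogConcave f) (hf0 : ∀ x, 0 ≤ f x) (x y : ℝ) :
    √(f x * f y) ≤ f ((x + y) / 2) := by
  calc √(f x * f y) = f x ^ (1 / 2 : ℝ) * f y ^ (1 / 2 : ℝ) := by
        rw [Real.sqrt_eq_rpow, Real.mul_rpow (hf0 x) (hf0 y)]
    _ ≤ f ((x + y) / 2) := by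
        have := hf x y (1 / 2) (1 / 2) (by norm_num) (by norm_num) (by norm_num)
        rwa [show 1 / 2 * x + 1 / 2 * y = (x + y) / 2 by ring] at this

theorem mul_le_mul_of_add_eq (hf : IsLogConcave f) (hf0 : ∀ x, 0 ≤ f x) {a b c d : ℝ}
    (hab : a ≤ b) (hbd : b ≤ d) (h : b + c = a + d) : f a * f d ≤ f b * f c := by
  rcases hab.eq_or_lt with rfl | hab
  · rw [show c = d by linarith]
  set l := (d - b) / (d - a)
  have hl : l ∈ Icc (0 : ℝ) 1 := ⟨div_nonneg (by linarith) (by linarith),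
    div_le_one_of_le₀ (by linarith) (by linarith)⟩
  have hda : d - a ≠ 0 := by linarith
  have hb : l * a + (1 - l) * d = b := by simp only [l]; field_simp; ring
  have hc : (1 - l) * a + l * d = c := by
    rw [show c = a + d - b by linarith]; simp only [l]; field_simp; ring
  have e1 := hf a d l (1 - l) hl.1 (by linarith [hl.2]) (by ring)
  have e2 := hf a d (1 - l) l (by linarith [hl.2]) hl.1 (by ring)
  rw [hb] at e1
  rw [hc] at e2
  calc f a * f d = (f a ^ l * f d ^ (1 - l)) * (f a ^ (1 - l) * f d ^ l) := by
        rw [mul_mul_mul_comm, ← Real.rpow_add' (hf0 a) (by simp), mul_comm (f d ^ _),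
          ← Real.rpow_add' (hf0 d) (by simp)]
        simp
    _ ≤ f b * f c :=
        mul_le_mul e1 e2 (mul_nonneg (Real.rpow_nonneg (hf0 a) _) (Real.rpow_nonneg (hf0 d) _))
          (hf0 b)

theorem mul_min_le_sq (hf : IsLogConcave f) (hf0 : ∀ x, 0 ≤ f x) (hfint : Integrable f)
    {x₀ x₁ : ℝ} (hx : x₀ < x₁) (x : ℝ) :
    f x * min (f x₀) (f x₁) ≤ (2 * (∫ y, f y) / (x₁ - x₀)) ^ 2 := by
  set J := Icc ((x + x₀) / 2) ((x + x₁) / 2)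
  have hJ : volume.real J = (x₁ - x₀) / 2 := by
    rw [Real.volume_real_Icc_of_le (by linarith)]; ring
  have hlow : ∀ w ∈ J, √(f x * min (f x₀) (f x₁)) ≤ f w := fun w hw => by
    have hv : min (f x₀) (f x₁) ≤ f (2 * w - x) :=
      Real.quasiconcaveOn_univ_iff_min_le.mp (hf.quasiconcaveOn hf0) (by linarith [hw.1])
        (by linarith [hw.2])
    calc √(f x * min (f x₀) (f x₁)) ≤ √(f x * f (2 * w - x)) :=
          Real.sqrt_le_sqrt (mul_le_mul_of_nonneg_left hv (hf0 x))
      _ ≤ f w := by simpa using hf.sqrt_mul_le hf0 x (2 * w - x)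
  have hint : √(f x * min (f x₀) (f x₁)) * ((x₁ - x₀) / 2) ≤ ∫ y, f y := by
    calc _ ≤ ∫ y in J, f y := by
          have := setIntegral_ge_of_const_le_real measurableSet_Icc measure_Icc_lt_top.ne hlow
            hfint.integrableOn
          rwa [hJ] at this
      _ ≤ ∫ y, f y := setIntegral_le_integral hfint (.of_forall hf0)
  have hI : 0 ≤ 2 * (∫ y, f y) / (x₁ - x₀) :=
    div_nonneg (mul_nonneg zero_le_two (integral_nonneg hf0)) (by linarith)
  rw [← Real.sqrt_le_left hI, le_div_iff₀ (by linarith)]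
  linarith

theorem bddAbove_range (hf : IsLogConcave f) (hf0 : ∀ x, 0 ≤ f x) (hfint : Integrable f) :
    BddAbove (range f) := by
  by_cases hS : {x | 0 < f x}.Subsingleton
  · refine ((hS.finite.image f).bddAbove.union (bddAbove_Iic (a := 0))).mono ?_
    rintro _ ⟨x, rfl⟩
    rcases (hf0 x).lt_or_eq with h | h
    exacts [.inl ⟨x, h, rfl⟩, .inr h.ge]
  obtain ⟨x₀, h₀, x₁, h₁, hx⟩ := (not_subsingleton_iff.mp hS).exists_lt
  refine ⟨(2 * (∫ y, f y) / (x₁ - x₀)) ^ 2 / min (f x₀) (f x₁), ?_⟩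
  rintro _ ⟨x, rfl⟩
  exact (le_div_iff₀ (lt_min h₀ h₁)).mpr (hf.mul_min_le_sq hf0 hfint hx x)

end IsLogConcave

def IsTP2 {α β : Type*} [Preorder α] [Preorder β] (K : α → β → ℝ) : Prop :=
  ∀ ⦃u₁ u₂ s t⦄, u₁ ≤ u₂ → s ≤ t → K u₁ t * K u₂ s ≤ K u₁ s * K u₂ t

namespace IsTP2

variable {α β : Type*} [Preorder α] [Preorder β] [MeasurableSpace α] {μ : Measure α}
  {K : α → β → ℝ} {s t : β}

theorem integral_mul_integral_le (hK : IsTP2 K) {a b : α → ℝ}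
    (ha : ∀ u, 0 ≤ a u) (hb : ∀ u, 0 ≤ b u) (hab : ∀ ⦃u₁ u₂⦄, 0 < a u₁ → 0 < b u₂ → u₁ ≤ u₂)
    (ha_int : ∀ r, Integrable (fun u => a u * K u r) μ)
    (hb_int : ∀ r, Integrable (fun u => b u * K u r) μ) (hst : s ≤ t) :
    (∫ u, a u * K u t ∂μ) * (∫ u, b u * K u s ∂μ) ≤
      (∫ u, a u * K u s ∂μ) * (∫ u, b u * K u t ∂μ) := by
  have hpt : ∀ u₁ u₂, a u₁ * K u₁ t * (b u₂ * K u₂ s) ≤ a u₁ * K u₁ s * (b u₂ * K u₂ t) := by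
    intro u₁ u₂
    rcases (ha u₁).lt_or_eq with h₁ | h₁
    · rcases (hb u₂).lt_or_eq with h₂ | h₂
      · calc a u₁ * K u₁ t * (b u₂ * K u₂ s) = a u₁ * b u₂ * (K u₁ t * K u₂ s) := by ring
          _ ≤ a u₁ * b u₂ * (K u₁ s * K u₂ t) :=
            mul_le_mul_of_nonneg_left (hK (hab h₁ h₂) hst) (mul_nonneg h₁.le h₂.le)
          _ = a u₁ * K u₁ s * (b u₂ * K u₂ t) := by ring
      · simp [← h₂]
    · simp [← h₁]
  calc (∫ u, a u * K u t ∂μ) * (∫ u, b u * K u s ∂μ)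
      = ∫ u₁, a u₁ * K u₁ t * ∫ u₂, b u₂ * K u₂ s ∂μ ∂μ := (integral_mul_const _ _).symm
    _ ≤ ∫ u₁, a u₁ * K u₁ s * ∫ u₂, b u₂ * K u₂ t ∂μ ∂μ := by
      refine integral_mono ((ha_int t).mul_const _) ((ha_int s).mul_const _) fun u₁ => ?_
      simp only [← integral_const_mul]
      exact integral_mono ((hb_int s).const_mul _) ((hb_int t).const_mul _) (hpt u₁)
    _ = (∫ u, a u * K u s ∂μ) * (∫ u, b u * K u t ∂μ) := integral_mul_const _ _

theorem integral_mul_nonpos_of_neg (hK : IsTP2 K) (hK0 : ∀ u r, 0 ≤ K u r) {φ : α → ℝ}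
    (hφ : ∀ ⦃u₁ u₂⦄, 0 < φ u₁ → φ u₂ < 0 → u₁ ≤ u₂)
    (hint : ∀ r, Integrable (fun u => φ u * K u r) μ) (hst : s ≤ t)
    (hs : ∫ u, φ u * K u s ∂μ < 0) : ∫ u, φ u * K u t ∂μ ≤ 0 := by
  have hpos : ∀ r, (fun u => max (φ u) 0 * K u r) = fun u => max (φ u * K u r) 0 := fun r =>
    funext fun u => by rw [max_mul_of_nonneg _ _ (hK0 u r), zero_mul]
  have hneg : ∀ r, (fun u => max (-φ u) 0 * K u r) = fun u => max (-(φ u * K u r)) 0 := fun r =>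
    funext fun u => by rw [max_mul_of_nonneg _ _ (hK0 u r), zero_mul, neg_mul]
  have hP : ∀ r, Integrable (fun u => max (φ u) 0 * K u r) μ := fun r =>
    hpos r ▸ (hint r).pos_part
  have hN : ∀ r, Integrable (fun u => max (-φ u) 0 * K u r) μ := fun r =>
    hneg r ▸ (hint r).neg.pos_part
  have hsplit : ∀ r, ∫ u, φ u * K u r ∂μ =
      (∫ u, max (φ u) 0 * K u r ∂μ) - ∫ u, max (-φ u) 0 * K u r ∂μ := fun r => by
    rw [← integral_sub (hP r) (hN r)]
    simp_rw [← sub_mul, max_zero_sub_max_neg_zero_eq_self]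
  have key := hK.integral_mul_integral_le (μ := μ) (fun u => le_max_right (φ u) 0)
    (fun u => le_max_right (-φ u) 0)
    (fun u₁ u₂ h₁ h₂ => hφ (lt_max_iff.mp h₁ |>.resolve_right (lt_irrefl 0))
      (neg_pos.mp (lt_max_iff.mp h₂ |>.resolve_right (lt_irrefl 0)))) hP hN hst
  rw [hsplit, sub_neg] at hs
  rw [hsplit, sub_nonpos]
  set Ps := ∫ u, max (φ u) 0 * K u s ∂μ
  set Pt := ∫ u, max (φ u) 0 * K u t ∂μ
  set Ns := ∫ u, max (-φ u) 0 * K u s ∂μ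
  set Nt := ∫ u, max (-φ u) 0 * K u t ∂μ
  have hPs : 0 ≤ Ps := integral_nonneg fun u => mul_nonneg (le_max_right (φ u) 0) (hK0 u s)
  have hNt : 0 ≤ Nt := integral_nonneg fun u => mul_nonneg (le_max_right (-φ u) 0) (hK0 u t)
  refine le_of_mul_le_mul_right ?_ (hPs.trans_lt hs)
  calc Pt * Ns ≤ Ps * Nt := key
    _ ≤ Ns * Nt := mul_le_mul_of_nonneg_right hs.le hNt
    _ = Nt * Ns := mul_comm _ _

end IsTP2

theorem IsLogConcave.isTP2_comp_sub {f : ℝ → ℝ} (hf : IsLogConcave f) (hf0 : ∀ x, 0 ≤ f x) :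
    IsTP2 fun u r : ℝ => f (u - r) := fun u₁ u₂ s t hu hst =>
  hf.mul_le_mul_of_add_eq hf0 (by linarith : u₁ - t ≤ u₁ - s) (by linarith : u₁ - s ≤ u₂ - s)
    (by ring)

section Convolution

variable {p f : ℝ → ℝ} {C : ℝ}

theorem integral_comp_add_mul_eq (t : ℝ) : ∫ h, p (t + h) * f h = ∫ u, p u * f (u - t) := by
  simpa using integral_add_left_eq_self (fun u => p u * f (u - t)) t

theorem MeasureTheory.Integrable.mul_comp_sub_right (hp : Integrable p)
    (hf : AEStronglyMeasurable f) (hfC : ∀ x, ‖f x‖ ≤ C) (r : ℝ) :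
    Integrable fun u => p u * f (u - r) :=
  hp.mul_bdd
    (hf.comp_quasiMeasurePreserving (measurePreserving_sub_right volume r).quasiMeasurePreserving)
    (.of_forall fun _ => hfC _)

theorem integral_comp_add_mul_sub (hp : Integrable p) (hf : AEStronglyMeasurable f)
    (hfC : ∀ x, ‖f x‖ ≤ C) (r δ : ℝ) :
    (∫ h, p (r + δ + h) * f h) - ∫ h, p (r + h) * f h = ∫ u, (p (u + δ) - p u) * f (u - r) := by
  rw [integral_comp_add_mul_eq, integral_comp_add_mul_eq,
    ← integral_add_right_eq_self (fun u => p u * f (u - (r + δ))) δ]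
  simp only [add_sub_add_right_eq_sub]
  rw [← integral_sub ((hp.comp_add_right δ).mul_comp_sub_right hf hfC r)
      (hp.mul_comp_sub_right hf hfC r)]
  simp only [sub_mul]

theorem continuous_integral_comp_add_mul (hp : Integrable p) (hf : AEStronglyMeasurable f)
    (hfC : ∀ x, ‖f x‖ ≤ C) :
    Continuous fun t => ∫ h, p (t + h) * f h := by
  replace hfC : ∀ᵐ x, ‖f x‖ ≤ C := .of_forall hfC
  have hΛ : ∀ Q R : ℝ →₁[volume] ℝ,
      dist (∫ h, Q h * f h) (∫ h, R h * f h) ≤ C * dist Q R := by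
    intro Q R
    rw [Real.dist_eq, dist_eq_norm, L1.norm_eq_integral_norm,
      ← integral_sub ((L1.integrable_coeFn Q).mul_bdd hf hfC)
        ((L1.integrable_coeFn R).mul_bdd hf hfC), ← integral_const_mul]
    refine (abs_integral_le_integral_abs).trans (integral_mono_ae ?_ ?_ ?_)
    · exact (((L1.integrable_coeFn Q).sub (L1.integrable_coeFn R)).mul_bdd hf hfC).abs.congr
        (.of_forall fun h => by simp only [Pi.sub_apply, sub_mul])
    · exact (L1.integrable_coeFn (Q - R)).norm.const_mul C
    · filter_upwards [hfC, Lp.coeFn_sub Q R] with h hC hQR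
      rw [← sub_mul, abs_mul, hQR, Pi.sub_apply, ← Real.norm_eq_abs, ← Real.norm_eq_abs, mul_comm]
      exact mul_le_mul_of_nonneg_right hC (norm_nonneg _)
  have : Fact ((1 : ENNReal) ≠ ⊤) := ⟨ENNReal.one_ne_top⟩
  set P : ℝ →₁[volume] ℝ := hp.toL1 p
  have hF : Continuous fun t : ℝ => DomAddAct.mk t +ᵥ P :=
    DomAddAct.continuous_mk.vadd continuous_const
  have hg : (fun t => ∫ h, p (t + h) * f h) = fun t => ∫ h, (DomAddAct.mk t +ᵥ P) h * f h := by
    ext t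
    refine integral_congr_ae ?_
    filter_upwards [DomAddAct.vadd_Lp_ae_eq (DomAddAct.mk t) P,
      (measurePreserving_add_left volume t).quasiMeasurePreserving.ae_eq_comp
        (hp.coeFn_toL1)] with h h1 h2
    simp only [Function.comp_apply] at h2
    rw [h1, Equiv.symm_apply_apply, vadd_eq_add, h2]
  rw [hg]
  exact (LipschitzWith.of_dist_le' hΛ).continuous.comp hF

end Convolution

theorem convolution_logconcave_preserves_quasiconcave_general
    (p f : ℝ → ℝ)
    (hpint : Integrable p)
    (hpqc : QuasiconcaveOn ℝ Set.univ p)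
    (hf0 : ∀ x, 0 ≤ f x) (hfint : Integrable f)
    (hflc : ∀ x y a b : ℝ, 0 ≤ a → 0 ≤ b → a + b = 1 →
      f x ^ a * f y ^ b ≤ f (a * x + b * y)) :
    QuasiconcaveOn ℝ Set.univ (fun t => ∫ h, p (t + h) * f h) := by
  have hf : IsLogConcave f := hflc
  obtain ⟨M, hM⟩ := hf.bddAbove_range hf0 hfint
  have hfM : ∀ x, ‖f x‖ ≤ M := fun x => (Real.norm_of_nonneg (hf0 x)).trans_le (hM ⟨x, rfl⟩)
  have hφ : ∀ δ r, Integrable fun u => (p (u + δ) - p u) * f (u - r) := fun δ =>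
    ((hpint.comp_add_right δ).sub hpint).mul_comp_sub_right hfint.aestronglyMeasurable hfM
  refine (continuous_integral_comp_add_mul hpint hfint.aestronglyMeasurable hfM
    ).quasiconcaveOn_univ_of_step fun δ hδ s t hst hs => ?_
  rw [← sub_neg, integral_comp_add_mul_sub hpint hfint.aestronglyMeasurable hfM] at hs
  rw [← sub_nonpos, integral_comp_add_mul_sub hpint hfint.aestronglyMeasurable hfM]
  refine (hf.isTP2_comp_sub hf0).integral_mul_nonpos_of_neg (fun _ _ => hf0 _)
    (fun u₁ u₂ h₁ h₂ => le_of_not_gt fun h => ?_) (hφ δ) hst hs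
  exact (hpqc.apply_add_le_of_lt hδ.le (sub_neg.mp h₂) h.le).not_gt (sub_pos.mp h₁)

/-- Convolution with a log-concave density preserves quasiconcavity: if `p` is a
quasiconcave probability density and `f` is a log-concave probability density, then the
density of `T − H` (with `T ~ p`, `H ~ f` independent), namely `t ↦ ∫ p(t+h) f(h) dh`,
is quasiconcave. -/
theorem convolution_logconcave_preserves_quasiconcave
    (p f : ℝ → ℝ)
    (hp0 : ∀ x, 0 ≤ p x) (hpint : Integrable p) (hp1 : ∫ x, p x = 1)
    (hpqc : QuasiconcaveOn ℝ Set.univ p)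
    (hf0 : ∀ x, 0 ≤ f x) (hfint : Integrable f) (hf1 : ∫ x, f x = 1)
    (hflc : ∀ x y a b : ℝ, 0 ≤ a → 0 ≤ b → a + b = 1 →
      f x ^ a * f y ^ b ≤ f (a * x + b * y)) :
    QuasiconcaveOn ℝ Set.univ (fun t => ∫ h, p (t + h) * f h) :=
  convolution_logconcave_preserves_quasiconcave_general p f hpint hpqc hf0 hfint hflc
end
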